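/- arXiv:1801.00053 — 2 statements merged into one kernel-verified Lean document; each statement's English description precedes it below -/
import Mathlib

section
/- The Janet division is an involutive division: for any finite set U of monomials, the relation 'u is a Janet divisor of w with respect to U' satisfies the six axioms of an involutive division. -/
/-- The variable `x_i` is Janet-multiplicative for the monomial `u` with respect to the
finite set of monomials `U` (variables ordered `x_n > … > x_1`, i.e. by their index):
`u` has maximal `i`-degree among the monomials of `U` agreeing with `u` in all
degrees of index `> i`. -/
def JanetMult {n : ℕ} (U : Finset (Fin n → ℕ)) (u : Fin n → ℕ) (i : Fin n) : Prop :=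
  ∀ v ∈ U, (∀ j, i < j → v j = u j) → v i ≤ u i

/-- `u` is a Janet divisor of `w` with respect to `U`: `u ∈ U`, `u` divides `w`, and every
variable occurring in the quotient `w/u` is Janet-multiplicative for `u` w.r.t. `U`. -/
def JanetDiv {n : ℕ} (U : Finset (Fin n → ℕ)) (u w : Fin n → ℕ) : Prop :=
  u ∈ U ∧ u ≤ w ∧ ∀ i, u i < w i → JanetMult U u i

/-- The six Gerdt–Blinkov axioms for an involutive division, given as a relation
`d U u w` (read: `u` is an involutive divisor of `w` with respect to `U`) defined for
every finite set of monomials `U` and `u ∈ U`. -/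
def IsInvolutiveDivision (n : ℕ)
    (d : Finset (Fin n → ℕ) → (Fin n → ℕ) → (Fin n → ℕ) → Prop) : Prop :=
  (∀ U u w, d U u w → u ∈ U ∧ u ≤ w) ∧
  (∀ (U : Finset (Fin n → ℕ)) u, u ∈ U → d U u u) ∧
  (∀ (U : Finset (Fin n → ℕ)) u, u ∈ U →
      ∀ v w : Fin n → ℕ, (d U u (u + v) ∧ d U u (u + w)) ↔ d U u (u + v + w)) ∧
  (∀ (U : Finset (Fin n → ℕ)) u u' w, d U u w → d U u' w → d U u u' ∨ d U u' u) ∧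
  (∀ (U : Finset (Fin n → ℕ)) u u' w, d U u u' → d U u' w → d U u w) ∧
  (∀ (U U' : Finset (Fin n → ℕ)) u w, U' ⊆ U → u ∈ U' → d U u w → d U' u w)

/-!
The whole argument rests on uniqueness of Janet divisors: if `u` and `u'` in `U` both
Janet-divide `w` and differ, look at the highest variable `x_k` in which they differ, say
`u k < u' k ≤ w k`. Then `x_k` occurs in `w / u`, so it is multiplicative for `u`, which
forbids `u' ∈ U` (agreeing with `u` above `k`) from having larger `k`-degree. Since every
`u ∈ U` Janet-divides itself, uniqueness gives both axiom (iv) and transitivity (v).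
-/

lemma Function.exists_ne_forall_gt_eq {ι α : Type*} [LinearOrder ι] [Finite ι] {f g : ι → α}
    (h : f ≠ g) : ∃ k, f k ≠ g k ∧ ∀ j, k < j → f j = g j := by
  obtain ⟨k, hk, hmax⟩ :=
    (Set.toFinite {j | f j ≠ g j}).exists_maximal (Function.ne_iff.mp h)
  exact ⟨k, hk, fun j hkj => by_contra fun hj => (hmax hj hkj.le).not_gt hkj⟩

variable {n : ℕ} {U U' : Finset (Fin n → ℕ)} {u u' v w : Fin n → ℕ}

lemma JanetMult.mono {i : Fin n} (hU : U' ⊆ U) (h : JanetMult U u i) : JanetMult U' u i :=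
  fun v hv => h v (hU hv)

lemma JanetDiv.mono (hU : U' ⊆ U) (hu : u ∈ U') (h : JanetDiv U u w) : JanetDiv U' u w :=
  ⟨hu, h.2.1, fun i hi => (h.2.2 i hi).mono hU⟩

lemma janetDiv_self (hu : u ∈ U) : JanetDiv U u u :=
  ⟨hu, le_rfl, fun _ hi => absurd hi (lt_irrefl _)⟩

lemma janetDiv_add_iff (hu : u ∈ U) : JanetDiv U u (u + v) ↔ ∀ i, v i ≠ 0 → JanetMult U u i := by
  simp only [JanetDiv, hu, true_and, le_add_iff_nonneg_right, zero_le, Pi.add_apply,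
    lt_add_iff_pos_right, Nat.pos_iff_ne_zero]

lemma JanetDiv.apply_le_of_agree_above (h : JanetDiv U u w) (hv : v ∈ U) (hvw : v ≤ w) {k : Fin n}
    (hagree : ∀ j, k < j → v j = u j) : v k ≤ u k :=
  by_contra fun hlt => hlt (h.2.2 k ((not_le.mp hlt).trans_le (hvw k)) v hv hagree)

lemma JanetDiv.unique (h : JanetDiv U u w) (h' : JanetDiv U u' w) : u = u' := by
  by_contra hne
  obtain ⟨k, hk, hagree⟩ := Function.exists_ne_forall_gt_eq hne
  have hle : u' k ≤ u k := h.apply_le_of_agree_above h'.1 h'.2.1 fun j hj => (hagree j hj).symm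
  have hge : u k ≤ u' k := h'.apply_le_of_agree_above h.1 h.2.1 hagree
  exact hk (le_antisymm hge hle)

lemma JanetDiv.trans (h : JanetDiv U u u') (h' : JanetDiv U u' w) : JanetDiv U u w :=
  h.unique (janetDiv_self h'.1) ▸ h'

lemma janetDiv_add_and_iff (hu : u ∈ U) :
    JanetDiv U u (u + v) ∧ JanetDiv U u (u + w) ↔ JanetDiv U u (u + v + w) := by
  rw [add_assoc, janetDiv_add_iff hu, janetDiv_add_iff hu, janetDiv_add_iff hu, ← forall_and]
  refine forall_congr' fun i => ?_
  simp only [Pi.add_apply, ne_eq, Nat.add_eq_zero_iff, not_and_or, or_imp]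

/-- The Janet division is an involutive division: the Janet divisibility relation
satisfies the six axioms of an involutive division. -/
theorem janet_division_is_involutive (n : ℕ) :
    IsInvolutiveDivision n (fun U u w => JanetDiv U u w) :=
  ⟨fun _ _ _ h => ⟨h.1, h.2.1⟩,
    fun _ _ => janetDiv_self,
    fun _ _ hu _ _ => janetDiv_add_and_iff hu,
    fun _ _ _ _ h h' => .inl (h.unique h' ▸ janetDiv_self h.1),
    fun _ _ _ _ => JanetDiv.trans,
    fun _ _ _ _ => JanetDiv.mono⟩
end

section
/- For every finite set U of monomials in M(x_1,...,x_n), there exists a finite set J(U) such that: J(U) is complete for the Janet division, U ⊆ J(U), and cone(U) = cone(J(U)). -/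
/-- The cone of `U`: all multiples of monomials of `U`. -/
def MonCone {n : ℕ} (U : Finset (Fin n → ℕ)) : Set (Fin n → ℕ) :=
  {w | ∃ u ∈ U, u ≤ w}

/-- The Janet involutive cone of `U`: monomials admitting a Janet divisor in `U`. -/
def JanetCone {n : ℕ} (U : Finset (Fin n → ℕ)) : Set (Fin n → ℕ) :=
  {w | ∃ u, JanetDiv U u w}

/-!
Let `d` be the least common multiple of `U` and let `V` be the set of monomials of `cone(U)`
dividing `d`. Then `U ⊆ V` and `cone(V) = cone(U)`. For `w ∈ cone(V)`, the monomial `w ⊓ d`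
(the gcd of `w` and `d`) lies in `V` and is a Janet divisor of `w`: a variable `x_i` occurs in
the quotient only where `w ⊓ d` already has the maximal possible `i`-degree `d i` among all
of `V`, so `x_i` is Janet-multiplicative for it.
-/

variable {n : ℕ}

theorem janetCone_subset_monCone (V : Finset (Fin n → ℕ)) : JanetCone V ⊆ MonCone V :=
  fun _ ⟨u, huV, huw, _⟩ => ⟨u, huV, huw⟩

theorem janetMult_of_apply_eq {V : Finset (Fin n → ℕ)} {u d : Fin n → ℕ} {i : Fin n}
    (hV : ∀ v ∈ V, v ≤ d) (hu : u i = d i) : JanetMult V u i :=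
  fun v hv _ => hu ▸ hV v hv i

theorem janetDiv_inf {V : Finset (Fin n → ℕ)} {w d : Fin n → ℕ}
    (hV : ∀ v ∈ V, v ≤ d) (hwd : w ⊓ d ∈ V) : JanetDiv V (w ⊓ d) w := by
  refine ⟨hwd, inf_le_left, fun i hi => janetMult_of_apply_eq hV ?_⟩
  exact min_eq_right ((min_lt_iff.mp hi).resolve_left (lt_irrefl _)).le

theorem monCone_eq_janetCone_of_inf_mem {V : Finset (Fin n → ℕ)} {d : Fin n → ℕ}
    (hV : ∀ v ∈ V, v ≤ d) (hinf : ∀ w ∈ MonCone V, w ⊓ d ∈ V) :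
    MonCone V = JanetCone V :=
  (janetCone_subset_monCone V).antisymm' fun w hw => ⟨w ⊓ d, janetDiv_inf hV (hinf w hw)⟩

open Classical in
noncomputable def boundedCone (U : Finset (Fin n → ℕ)) (d : Fin n → ℕ) :
    Finset (Fin n → ℕ) :=
  (Finset.Iic d).filter (· ∈ MonCone U)

theorem mem_boundedCone {U : Finset (Fin n → ℕ)} {d w : Fin n → ℕ} :
    w ∈ boundedCone U d ↔ w ≤ d ∧ w ∈ MonCone U := by
  simp [boundedCone]

section bounded

variable {U : Finset (Fin n → ℕ)} {d : Fin n → ℕ} (hU : ∀ u ∈ U, u ≤ d)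
include hU

theorem subset_boundedCone : U ⊆ boundedCone U d :=
  fun u hu => mem_boundedCone.mpr ⟨hU u hu, u, hu, le_rfl⟩

theorem monCone_boundedCone : MonCone (boundedCone U d) = MonCone U := by
  ext w
  constructor
  · rintro ⟨v, hv, hvw⟩
    obtain ⟨-, u, hu, huv⟩ := mem_boundedCone.mp hv
    exact ⟨u, hu, huv.trans hvw⟩
  · rintro ⟨u, hu, huw⟩
    exact ⟨u, subset_boundedCone hU hu, huw⟩

theorem inf_mem_boundedCone {w : Fin n → ℕ} (hw : w ∈ MonCone U) : w ⊓ d ∈ boundedCone U d := by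
  obtain ⟨u, hu, huw⟩ := hw
  exact mem_boundedCone.mpr ⟨inf_le_right, u, hu, le_inf huw (hU u hu)⟩

theorem monCone_boundedCone_eq_janetCone :
    MonCone (boundedCone U d) = JanetCone (boundedCone U d) := by
  refine monCone_eq_janetCone_of_inf_mem (fun v hv => (mem_boundedCone.mp hv).1) fun w hw => ?_
  exact inf_mem_boundedCone hU (monCone_boundedCone hU ▸ hw)

end bounded

/-- Janet's completion lemma: every finite set `U` of monomials is contained in a finite
complete set `J(U)` with the same cone. -/
theorem janet_completion_exists (n : ℕ) (U : Finset (Fin n → ℕ)) :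
    ∃ V : Finset (Fin n → ℕ),
      U ⊆ V ∧ MonCone V = JanetCone V ∧ MonCone U = MonCone V := by
  have hU : ∀ u ∈ U, u ≤ U.sup id := fun _ => Finset.le_sup (f := id)
  exact ⟨boundedCone U (U.sup id), subset_boundedCone hU,
    monCone_boundedCone_eq_janetCone hU, (monCone_boundedCone hU).symm⟩
end
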